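/- arXiv:1602.03992 — 2 statements merged into one kernel-verified Lean document; each statement's English description precedes it below -/
import Mathlib

section
/- Let 0 < p ≤ 1, 0 < ε, integers m ≥ q ≥ 1, S a real symmetric positive semidefinite m×m matrix, D a q×q diagonal matrix with nonnegative diagonal entries, nonnegative reals ρ₁,…,ρ_q, and U₀ ∈ St(m,q). Define f(U) = Tr(UᵀSUD) − Σ_{j=1}^q ρ_j Σ_{i=1}^m g_p^ε(U_{ij}), G = S U₀ D, weights w_{ij} = w((U₀)_{ij}; ρ_j), w_max,j = max_{1≤i≤m} w_{ij}, and H_{ij} = (w_{ij} − w_max,j)(U₀)_{ij}. Then for every U ∈ St(m,q), f(U) − 2·Tr((G − H)ᵀU) ≥ f(U₀) − 2·Tr((G − H)ᵀU₀); that is, up to an additive constant, 2·Tr((G − H)ᵀU) is a global minorant of f on the Stiefel manifold that is tight at U = U₀. -/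
open Matrix

/-- The smoothed ℓ₀ surrogate `g_p^ε`. -/
noncomputable def gpe (p ε x : ℝ) : ℝ :=
  if |x| ≤ ε then x ^ 2 / (2 * ε * (p + ε) * Real.log (1 + 1 / p))
  else (Real.log ((p + |x|) / (p + ε)) + ε / (2 * (p + ε))) / Real.log (1 + 1 / p)

/-- The majorization weight `w(x₀; ρ)`. -/
noncomputable def wgt (p ε ρ x₀ : ℝ) : ℝ :=
  if |x₀| ≤ ε then ρ / (2 * ε * (p + ε) * Real.log (1 + 1 / p))
  else ρ / (2 * Real.log (1 + 1 / p) * |x₀| * (|x₀| + p))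
/-!
Writing `s = x²`, the surrogate `g_p^ε` is a concave function of `s` (quadratic, then logarithmic
in `√s`) with derivative `w(x₀; 1)` at `s₀ = x₀²`, so `ρ g(x) ≤ ρ g(x₀) + w(x₀; ρ)(x² - x₀²)`.
Summed down a column, the weights `w_{ij}` may be replaced by their maximum `w_max,j` at the cost
of `2 H_{ij} (U_{ij} - (U₀)_{ij})`, because the columns of `U` and `U₀` are unit vectors.
The quadratic part `Tr(UᵀSUD)` is convex, hence lies above its tangent `2 Tr(Gᵀ(U - U₀))` at `U₀`.
-/

open Real

section Surrogate

variable {p ε t t₀ : ℝ}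

lemma sq_div_le_log_add_tangent (hp : 0 < p) (hε : 0 < ε) (ht : 0 ≤ t) (htε : t ≤ ε)
    (hεt₀ : ε < t₀) :
    t ^ 2 / (2 * ε * (p + ε)) ≤
      log ((p + t₀) / (p + ε)) + ε / (2 * (p + ε)) + (t ^ 2 - t₀ ^ 2) / (2 * t₀ * (t₀ + p)) := by
  have ht₀ : 0 < t₀ := hε.trans hεt₀
  have hlog := one_sub_inv_le_log_of_pos (show 0 < (p + t₀) / (p + ε) by positivity)
  rw [inv_div] at hlog
  have hgap : 0 ≤ 1 - (p + ε) / (p + t₀) + ε / (2 * (p + ε))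
      + (t ^ 2 - t₀ ^ 2) / (2 * t₀ * (t₀ + p)) - t ^ 2 / (2 * ε * (p + ε)) := by
    have hnum : 0 ≤ (t₀ - ε) * (t₀ + ε + p) * (ε ^ 2 - t ^ 2) + ε * (p + ε) * (t₀ - ε) ^ 2 := by
      have : 0 ≤ ε ^ 2 - t ^ 2 := by nlinarith
      have : 0 ≤ t₀ - ε := by linarith
      positivity
    have hden : 0 < 2 * ε * (p + ε) * t₀ * (p + t₀) := by positivity
    have key : 1 - (p + ε) / (p + t₀) + ε / (2 * (p + ε))
        + (t ^ 2 - t₀ ^ 2) / (2 * t₀ * (t₀ + p)) - t ^ 2 / (2 * ε * (p + ε))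
        = ((t₀ - ε) * (t₀ + ε + p) * (ε ^ 2 - t ^ 2) + ε * (p + ε) * (t₀ - ε) ^ 2)
          / (2 * ε * (p + ε) * t₀ * (p + t₀)) := by
      field_simp
      ring
    rw [key]
    exact div_nonneg hnum hden.le
  linarith

lemma log_add_le_sq_div (hp : 0 < p) (hε : 0 < ε) (hεt : ε < t) :
    log ((p + t) / (p + ε)) + ε / (2 * (p + ε)) ≤ t ^ 2 / (2 * ε * (p + ε)) := by
  have ht : 0 < t := hε.trans hεt
  have hlog := log_le_sub_one_of_pos (show 0 < (p + t) / (p + ε) by positivity)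
  have hgap : t ^ 2 / (2 * ε * (p + ε)) - ε / (2 * (p + ε)) - ((p + t) / (p + ε) - 1)
      = (t - ε) ^ 2 / (2 * ε * (p + ε)) := by
    field_simp
    ring
  have : 0 ≤ (t - ε) ^ 2 / (2 * ε * (p + ε)) := by positivity
  linarith

lemma log_div_le_tangent (hp : 0 < p) (ht : 0 ≤ t) (ht₀ : 0 < t₀) :
    log ((p + t) / (p + t₀)) ≤ (t ^ 2 - t₀ ^ 2) / (2 * t₀ * (t₀ + p)) := by
  have hlog := log_le_sub_one_of_pos (show 0 < (p + t) / (p + t₀) by positivity)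
  have hgap : (t ^ 2 - t₀ ^ 2) / (2 * t₀ * (t₀ + p)) - ((p + t) / (p + t₀) - 1)
      = (t - t₀) ^ 2 / (2 * t₀ * (t₀ + p)) := by
    field_simp
    ring
  have : 0 ≤ (t - t₀) ^ 2 / (2 * t₀ * (t₀ + p)) := by positivity
  linarith

theorem gpe_le_tangent (hp : 0 < p) (hε : 0 < ε) (x₀ x : ℝ) :
    gpe p ε x ≤ gpe p ε x₀ + wgt p ε 1 x₀ * (x ^ 2 - x₀ ^ 2) := by
  have hL : 0 < log (1 + 1 / p) := log_pos (by simp [hp])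
  unfold gpe wgt
  rw [← sq_abs x, ← sq_abs x₀]
  have ht := abs_nonneg x
  generalize |x| = t at *
  generalize |x₀| = t₀
  split_ifs with htε ht₀ε ht₀ε
  · exact le_of_eq (by field_simp; ring)
  · have ht₀ : 0 < t₀ := by linarith
    calc t ^ 2 / (2 * ε * (p + ε) * log (1 + 1 / p))
        = t ^ 2 / (2 * ε * (p + ε)) / log (1 + 1 / p) := by field_simp
      _ ≤ (log ((p + t₀) / (p + ε)) + ε / (2 * (p + ε))
            + (t ^ 2 - t₀ ^ 2) / (2 * t₀ * (t₀ + p))) / log (1 + 1 / p) := by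
          gcongr
          exact sq_div_le_log_add_tangent hp hε ht htε (not_le.mp ht₀ε)
      _ = _ := by field_simp
  · calc (log ((p + t) / (p + ε)) + ε / (2 * (p + ε))) / log (1 + 1 / p)
        ≤ t ^ 2 / (2 * ε * (p + ε)) / log (1 + 1 / p) := by
          gcongr
          exact log_add_le_sq_div hp hε (not_le.mp htε)
      _ = _ := by field_simp; ring
  · have ht₀ : 0 < t₀ := by linarith
    calc (log ((p + t) / (p + ε)) + ε / (2 * (p + ε))) / log (1 + 1 / p)
        ≤ (log ((p + t₀) / (p + ε)) + ε / (2 * (p + ε))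
            + (t ^ 2 - t₀ ^ 2) / (2 * t₀ * (t₀ + p))) / log (1 + 1 / p) := by
          gcongr ?_ / _
          have hsplit : log ((p + t) / (p + ε))
              = log ((p + t) / (p + t₀)) + log ((p + t₀) / (p + ε)) := by
            rw [← log_mul (by positivity) (by positivity), div_mul_div_cancel₀ (by positivity)]
          linarith [log_div_le_tangent hp ht ht₀]
      _ = _ := by field_simp

lemma wgt_eq_mul (ρ x₀ : ℝ) : wgt p ε ρ x₀ = ρ * wgt p ε 1 x₀ := by
  unfold wgt
  split_ifs <;> ring

theorem mul_gpe_le_tangent (hp : 0 < p) (hε : 0 < ε) {ρ : ℝ} (hρ : 0 ≤ ρ) (x₀ x : ℝ) :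
    ρ * gpe p ε x ≤ ρ * gpe p ε x₀ + wgt p ε ρ x₀ * (x ^ 2 - x₀ ^ 2) := by
  rw [wgt_eq_mul, mul_assoc, ← mul_add]
  exact mul_le_mul_of_nonneg_left (gpe_le_tangent hp hε x₀ x) hρ

end Surrogate

section Columns

variable {ι κ : Type*} [Fintype ι]

lemma sum_sq_apply_eq_one_of_transpose_mul_self [DecidableEq κ] {U : Matrix ι κ ℝ}
    (hU : Uᵀ * U = 1) (j : κ) : ∑ i, U i j ^ 2 = 1 := by
  simpa [mul_apply, sq] using congr_fun₂ hU j j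

lemma sum_mul_sq_sub_sq_le {u u₀ w : ι → ℝ} {W : ℝ} (hw : ∀ i, w i ≤ W)
    (hnorm : ∑ i, u i ^ 2 = ∑ i, u₀ i ^ 2) :
    ∑ i, w i * (u i ^ 2 - u₀ i ^ 2) ≤ 2 * ∑ i, (w i - W) * u₀ i * (u i - u₀ i) := by
  have hshift : ∑ i, w i * (u i ^ 2 - u₀ i ^ 2) = ∑ i, (w i - W) * (u i ^ 2 - u₀ i ^ 2) := by
    simp only [sub_mul, Finset.sum_sub_distrib, ← Finset.mul_sum, hnorm, sub_self, mul_zero, sub_zero]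
  rw [hshift, Finset.mul_sum]
  refine Finset.sum_le_sum fun i _ => ?_
  nlinarith [mul_nonneg (sub_nonneg.mpr (hw i)) (sq_nonneg (u i - u₀ i))]

lemma trace_transpose_mul_eq_sum (A B : Matrix ι κ ℝ) [Fintype κ] :
    trace (Aᵀ * B) = ∑ j, ∑ i, A i j * B i j := by
  simp [trace, mul_apply]

end Columns

section Quadratic

variable {m n : Type*} [Fintype m] [Fintype n] [DecidableEq n]
  {S : Matrix m m ℝ} {d : n → ℝ}

theorem trace_transpose_mul_mul_mul_diagonal_nonneg (hS : S.PosSemidef) (hd : ∀ j, 0 ≤ d j)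
    (A : Matrix m n ℝ) : 0 ≤ trace (Aᵀ * S * A * diagonal d) := by
  have hP : (Aᵀ * S * A).PosSemidef := by
    simpa [conjTranspose_eq_transpose_of_trivial] using hS.conjTranspose_mul_mul_same A
  simp only [trace, diag, mul_diagonal]
  exact Finset.sum_nonneg fun j _ => mul_nonneg hP.diag_nonneg (hd j)

theorem trace_tangent_le_trace_transpose_mul_mul_mul_diagonal (hS : S.PosSemidef)
    (hd : ∀ j, 0 ≤ d j) (U₀ U : Matrix m n ℝ) :
    trace (U₀ᵀ * S * U₀ * diagonal d) + 2 * trace ((S * U₀ * diagonal d)ᵀ * (U - U₀)) ≤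
      trace (Uᵀ * S * U * diagonal d) := by
  have hSt : Sᵀ = S := by simpa [conjTranspose_eq_transpose_of_trivial] using hS.isHermitian.eq
  have hcross : ∀ A : Matrix m n ℝ,
      trace (U₀ᵀ * S * A * diagonal d) = trace ((S * U₀ * diagonal d)ᵀ * A) := fun A => by
    rw [transpose_mul, transpose_mul, hSt, diagonal_transpose, trace_mul_comm]
    simp only [Matrix.mul_assoc]
  have hcross' : ∀ A : Matrix m n ℝ,
      trace (Aᵀ * S * U₀ * diagonal d) = trace ((S * U₀ * diagonal d)ᵀ * A) := fun A => by
    rw [← hcross, ← trace_transpose]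
    simp only [transpose_mul, transpose_transpose, diagonal_transpose, hSt, Matrix.mul_assoc]
    rw [trace_mul_comm]
    simp only [Matrix.mul_assoc]
  have hA := trace_transpose_mul_mul_mul_diagonal_nonneg hS hd (U - U₀)
  obtain ⟨A, rfl⟩ : ∃ A, U = U₀ + A := ⟨U - U₀, by abel⟩
  simp only [add_sub_cancel_left, transpose_add, Matrix.add_mul, Matrix.mul_add, trace_add,
    hcross, hcross'] at hA ⊢
  linarith

end Quadratic

section Penalty

variable {ι κ : Type*} [Fintype ι] [Fintype κ] {p ε : ℝ}

/-- The matrix `H` of the statement, `H_{ij} = (w_{ij} - w_max,j) (U₀)_{ij}`. -/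
noncomputable def weightCorrection (p ε : ℝ) (ρ : κ → ℝ) (U₀ : Matrix ι κ ℝ) : Matrix ι κ ℝ :=
  of fun i j => (wgt p ε (ρ j) (U₀ i j) - ⨆ i', wgt p ε (ρ j) (U₀ i' j)) * U₀ i j

theorem sum_mul_sum_gpe_le (hp : 0 < p) (hε : 0 < ε) {ρ : κ → ℝ} (hρ : ∀ j, 0 ≤ ρ j)
    {U₀ U : Matrix ι κ ℝ} (hcol : ∀ j, ∑ i, U i j ^ 2 = ∑ i, U₀ i j ^ 2) :
    ∑ j, ρ j * ∑ i, gpe p ε (U i j) ≤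
      ∑ j, ρ j * ∑ i, gpe p ε (U₀ i j) + 2 * trace ((weightCorrection p ε ρ U₀)ᵀ * (U - U₀)) := by
  rw [trace_transpose_mul_eq_sum, Finset.mul_sum, ← Finset.sum_add_distrib]
  refine Finset.sum_le_sum fun j _ => ?_
  have hmax : ∀ i, wgt p ε (ρ j) (U₀ i j) ≤ ⨆ i', wgt p ε (ρ j) (U₀ i' j) :=
    le_ciSup (Set.finite_range _).bddAbove
  have hcorr := sum_mul_sq_sub_sq_le hmax (hcol j)
  calc ρ j * ∑ i, gpe p ε (U i j)
      ≤ ∑ i, (ρ j * gpe p ε (U₀ i j) + wgt p ε (ρ j) (U₀ i j) * (U i j ^ 2 - U₀ i j ^ 2)) := by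
        rw [Finset.mul_sum]
        exact Finset.sum_le_sum fun i _ => mul_gpe_le_tangent hp hε (hρ j) _ _
    _ ≤ _ := by
        rw [Finset.sum_add_distrib, ← Finset.mul_sum]
        simpa [weightCorrection] using hcorr

end Penalty

theorem stmt5_general (p ε : ℝ) (hp : 0 < p) (hε : 0 < ε)
    (m q : ℕ)
    (S : Matrix (Fin m) (Fin m) ℝ) (hS : S.PosSemidef)
    (d : Fin q → ℝ) (hd : ∀ i, 0 ≤ d i)
    (ρ : Fin q → ℝ) (hρ : ∀ j, 0 ≤ ρ j)
    (U₀ : Matrix (Fin m) (Fin q) ℝ) (hU₀ : U₀ᵀ * U₀ = 1)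
    (G H : Matrix (Fin m) (Fin q) ℝ)
    (hG : G = S * U₀ * Matrix.diagonal d)
    (hH : H = Matrix.of fun i j =>
      (wgt p ε (ρ j) (U₀ i j) - ⨆ i' : Fin m, wgt p ε (ρ j) (U₀ i' j)) * U₀ i j) :
    ∀ U : Matrix (Fin m) (Fin q) ℝ, Uᵀ * U = 1 →
      (Matrix.trace (U₀ᵀ * S * U₀ * Matrix.diagonal d)
          - ∑ j, ρ j * ∑ i, gpe p ε (U₀ i j)) - 2 * Matrix.trace ((G - H)ᵀ * U₀)
      ≤ (Matrix.trace (Uᵀ * S * U * Matrix.diagonal d)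
          - ∑ j, ρ j * ∑ i, gpe p ε (U i j)) - 2 * Matrix.trace ((G - H)ᵀ * U) := by
  intro U hU
  have hquad := trace_tangent_le_trace_transpose_mul_mul_mul_diagonal hS hd U₀ U
  have hpen := sum_mul_sum_gpe_le hp hε hρ (U₀ := U₀) (U := U) fun j => by
    rw [sum_sq_apply_eq_one_of_transpose_mul_self hU, sum_sq_apply_eq_one_of_transpose_mul_self hU₀]
  have hlin : trace ((G - H)ᵀ * U) - trace ((G - H)ᵀ * U₀)
      = trace (Gᵀ * (U - U₀)) - trace (Hᵀ * (U - U₀)) := by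
    simp only [transpose_sub, Matrix.sub_mul, Matrix.mul_sub, trace_sub]
    ring
  obtain rfl : H = weightCorrection p ε ρ U₀ := hH
  subst hG
  linarith

theorem stmt5 (p ε : ℝ) (hp : 0 < p) (hp1 : p ≤ 1) (hε : 0 < ε)
    (m q : ℕ) (hq : 1 ≤ q) (hqm : q ≤ m)
    (S : Matrix (Fin m) (Fin m) ℝ) (hS : S.PosSemidef)
    (d : Fin q → ℝ) (hd : ∀ i, 0 ≤ d i)
    (ρ : Fin q → ℝ) (hρ : ∀ j, 0 ≤ ρ j)
    (U₀ : Matrix (Fin m) (Fin q) ℝ) (hU₀ : U₀ᵀ * U₀ = 1)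
    (G H : Matrix (Fin m) (Fin q) ℝ)
    (hG : G = S * U₀ * Matrix.diagonal d)
    (hH : H = Matrix.of fun i j =>
      (wgt p ε (ρ j) (U₀ i j) - ⨆ i' : Fin m, wgt p ε (ρ j) (U₀ i' j)) * U₀ i j) :
    ∀ U : Matrix (Fin m) (Fin q) ℝ, Uᵀ * U = 1 →
      (Matrix.trace (U₀ᵀ * S * U₀ * Matrix.diagonal d)
          - ∑ j, ρ j * ∑ i, gpe p ε (U₀ i j)) - 2 * Matrix.trace ((G - H)ᵀ * U₀)
      ≤ (Matrix.trace (Uᵀ * S * U * Matrix.diagonal d)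
          - ∑ j, ρ j * ∑ i, gpe p ε (U i j)) - 2 * Matrix.trace ((G - H)ᵀ * U) :=
  stmt5_general p ε hp hε m q S hS d hd ρ hρ U₀ hU₀ G H hG hH
end

section
/- Let z ∈ ℝ^m have all entries positive, let 1 ≤ q < m, let r ≥ 0, and let C ⊆ {q+1,…,m} be nonempty. Assume: z_{q−r−1} > z_{q−r} (if q−r > 1); z_{q−i} ≤ z_{q−i+1} for i = 1,…,r; z_q ≤ z_c for every c ∈ C, with at least one of the inequalities in the last two groups strict; and z_q > z_j for every j ∈ {q+1,…,m} \ C. Let λ* be the unique minimizer of F_z over Λ_{q,m}. Then λ*_{q−r} = λ*_{q−r+1} = … = λ*_q, and moreover λ*_q = λ*_{c*}, where c* ∈ C is an index attaining the maximal value of z over C. -/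
/-!
At a minimiser, moving a single coordinate `λ_k` within the feasible set cannot decrease `F_z`;
since `t ↦ -log t + z_k t` has derivative `z_k - 1/t`, this gives `z_k λ_k ≥ 1` when `λ_k` can be
raised and `z_k λ_k ≤ 1` when it can be lowered. If two coordinates `a < b` linked by a constraint
`λ_a ≤ λ_b` were not tied, `a` could be raised and `b` lowered, so
`1 ≤ z_a λ_a < z_b λ_b ≤ 1` as soon as `z_a ≤ z_b`. Inside the block `q - r, …, q` this applies to
neighbours. For `c` maximising `z` over `C`, the role of `a` is played either by a tail coordinate
tied to `λ_q` or, if there is none, by `q` itself.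
-/

/-- The objective `F_z(λ) = Σ_{i=1}^m (−log λ_i + z_i λ_i)` (indices 1,…,m). -/
noncomputable def Fobj (m : ℕ) (z lam : ℕ → ℝ) : ℝ :=
  ∑ i ∈ Finset.Icc 1 m, (-(Real.log (lam i)) + z i * lam i)

/-- The feasible set `Λ_{q,m}`: positive entries, `λ_i ≤ λ_{i+1}` for `i = 1,…,q−1`,
and `λ_q ≤ λ_j` for `j = q+1,…,m`. -/
def Feas (q m : ℕ) (lam : ℕ → ℝ) : Prop :=
  (∀ i ∈ Finset.Icc 1 m, 0 < lam i) ∧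
  (∀ i, 1 ≤ i → i + 1 ≤ q → lam i ≤ lam (i + 1)) ∧
  (∀ j, q < j → j ≤ m → lam q ≤ lam j)

open Filter Topology Function

lemma neg_log_add_mul_sub_le (c : ℝ) {x t : ℝ} (hx : 0 < x) (ht : 0 < t) :
    (-Real.log t + c * t) - (-Real.log x + c * x) ≤ (t - x) * (c * t - 1) / t := by
  have hlog : Real.log x - Real.log t ≤ x / t - 1 := by
    rw [← Real.log_div hx.ne' ht.ne']
    exact Real.log_le_sub_one_of_pos (div_pos hx ht)
  have hrhs : (t - x) * (c * t - 1) / t = c * (t - x) + (x / t - 1) := by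
    field_simp
    ring
  rw [hrhs]
  linarith

lemma one_le_mul_of_eventually_nhdsGT {c x : ℝ} (hx : 0 < x)
    (h : ∀ᶠ t in 𝓝[>] x, -Real.log x + c * x ≤ -Real.log t + c * t) : 1 ≤ c * x := by
  by_contra! hcx
  have hlt : ∀ᶠ t in 𝓝[>] x, c * t < 1 :=
    nhdsWithin_le_nhds ((continuous_const_mul c).continuousAt.eventually (eventually_lt_nhds hcx))
  obtain ⟨t, hmin, hct, hxt : x < t⟩ := (h.and (hlt.and self_mem_nhdsWithin)).exists
  have ht : 0 < t := hx.trans hxt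
  have := neg_log_add_mul_sub_le c hx ht
  have : (t - x) * (c * t - 1) / t < 0 :=
    div_neg_of_neg_of_pos (mul_neg_of_pos_of_neg (sub_pos.2 hxt) (sub_neg.2 hct)) ht
  linarith

lemma mul_le_one_of_eventually_nhdsLT {c x : ℝ} (hx : 0 < x)
    (h : ∀ᶠ t in 𝓝[<] x, -Real.log x + c * x ≤ -Real.log t + c * t) : c * x ≤ 1 := by
  by_contra! hcx
  have hgt : ∀ᶠ t in 𝓝[<] x, 0 < t ∧ 1 < c * t :=
    nhdsWithin_le_nhds ((eventually_gt_nhds hx).and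
      ((continuous_const_mul c).continuousAt.eventually (eventually_gt_nhds hcx)))
  obtain ⟨t, hmin, ⟨ht, hct⟩, htx : t < x⟩ := (h.and (hgt.and self_mem_nhdsWithin)).exists
  have := neg_log_add_mul_sub_le c hx ht
  have : (t - x) * (c * t - 1) / t < 0 :=
    div_neg_of_neg_of_pos (mul_neg_of_neg_of_pos (sub_neg.2 htx) (sub_pos.2 hct)) ht
  linarith

lemma Fobj_update {m k : ℕ} (z lam : ℕ → ℝ) (hk : k ∈ Finset.Icc 1 m) (t : ℝ) :
    Fobj m z (update lam k t) =
      Fobj m z lam + ((-Real.log t + z k * t) - (-Real.log (lam k) + z k * lam k)) := by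
  unfold Fobj
  rw [← Finset.add_sum_erase _ _ hk, ← Finset.add_sum_erase _ _ hk,
    Finset.sum_congr rfl fun i hi => by rw [update_of_ne (Finset.ne_of_mem_erase hi)],
    update_self]
  ring

lemma one_lt_mul_of_one_le_mul {a b x y : ℝ} (h : 1 ≤ a * x) (hab : a ≤ b) (hx : 0 < x)
    (hxy : x < y) : 1 < b * y := by
  have ha : 0 < a := pos_of_mul_pos_left (one_pos.trans_le h) hx.le
  calc 1 ≤ a * x := h
    _ < a * y := mul_lt_mul_of_pos_left hxy ha
    _ ≤ b * y := mul_le_mul_of_nonneg_right hab (hx.trans hxy).le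

lemma eq_of_forall_eq_succ {α : Type*} {f : ℕ → α} {p q : ℕ}
    (h : ∀ a, p ≤ a → a < q → f a = f (a + 1)) {i : ℕ} (hpi : p ≤ i) (hiq : i ≤ q) :
    f i = f q := by
  induction q, hiq using Nat.le_induction with
  | base => rfl
  | succ n hin ih =>
    rw [ih fun a hpa han => h a hpa (by omega)]
    exact h n (hpi.trans hin) n.lt_succ_self

def ConstraintEdge (q m i j : ℕ) : Prop :=
  (1 ≤ i ∧ j = i + 1 ∧ j ≤ q) ∨ (i = q ∧ q < j ∧ j ≤ m)

lemma ConstraintEdge.lt {q m i j : ℕ} (e : ConstraintEdge q m i j) : i < j := by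
  unfold ConstraintEdge at e
  omega

lemma feas_iff {q m : ℕ} {lam : ℕ → ℝ} :
    Feas q m lam ↔
      (∀ i ∈ Finset.Icc 1 m, 0 < lam i) ∧ ∀ i j, ConstraintEdge q m i j → lam i ≤ lam j := by
  refine ⟨fun ⟨hpos, hchain, htail⟩ => ⟨hpos, ?_⟩, fun ⟨hpos, hle⟩ => ⟨hpos, ?_, ?_⟩⟩
  · rintro i j (⟨hi, rfl, hiq⟩ | ⟨rfl, hqj, hjm⟩)
    exacts [hchain i hi hiq, htail j hqj hjm]
  · exact fun i hi hiq => hle _ _ (.inl ⟨hi, rfl, hiq⟩)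
  · exact fun j hqj hjm => hle _ _ (.inr ⟨rfl, hqj, hjm⟩)

namespace Feas

variable {q m k : ℕ} {lam : ℕ → ℝ}

lemma le_of_constraintEdge (h : Feas q m lam) {i j : ℕ} (e : ConstraintEdge q m i j) :
    lam i ≤ lam j :=
  (feas_iff.1 h).2 i j e

lemma update {t : ℝ} (h : Feas q m lam) (ht : 0 < t)
    (hpred : ∀ i, ConstraintEdge q m i k → lam i ≤ t)
    (hsucc : ∀ j, ConstraintEdge q m k j → t ≤ lam j) : Feas q m (Function.update lam k t) := by
  obtain ⟨hpos, hle⟩ := feas_iff.1 h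
  refine feas_iff.2 ⟨fun i hi => ?_, fun i j e => ?_⟩
  · rcases eq_or_ne i k with rfl | hik
    · simpa using ht
    · simpa [hik] using hpos i hi
  · rcases eq_or_ne i k with rfl | hik
    · simpa [e.lt.ne'] using hsucc j e
    rcases eq_or_ne j k with rfl | hjk
    · simpa [hik] using hpred i e
    · simpa [hik, hjk] using hle i j e

lemma eventually_update_nhdsGT (h : Feas q m lam) (hk : 0 < lam k)
    (hsucc : ∀ j, ConstraintEdge q m k j → lam k < lam j) :
    ∀ᶠ t in 𝓝[>] lam k, Feas q m (Function.update lam k t) := by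
  have hbelow : ∀ᶠ t in 𝓝 (lam k),
      ∀ j ∈ Finset.range (q + m + 1), ConstraintEdge q m k j → t ≤ lam j :=
    (eventually_all_finset _).2 fun j _ => eventually_imp_distrib_left.2 fun e =>
      (eventually_lt_nhds (hsucc j e)).mono fun _ => le_of_lt
  filter_upwards [self_mem_nhdsWithin, nhdsWithin_le_nhds hbelow] with t (hkt : lam k < t) ht
  refine h.update (hk.trans hkt) (fun i e => (h.le_of_constraintEdge e).trans hkt.le) fun j e => ?_
  refine ht j (Finset.mem_range.2 ?_) e
  unfold ConstraintEdge at e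
  omega

lemma eventually_update_nhdsLT (h : Feas q m lam) (hk : 0 < lam k)
    (hpred : ∀ i, ConstraintEdge q m i k → lam i < lam k) :
    ∀ᶠ t in 𝓝[<] lam k, Feas q m (Function.update lam k t) := by
  have habove : ∀ᶠ t in 𝓝 (lam k),
      0 < t ∧ ∀ i ∈ Finset.range k, ConstraintEdge q m i k → lam i ≤ t :=
    (eventually_gt_nhds hk).and <| (eventually_all_finset _).2 fun i _ =>
      eventually_imp_distrib_left.2 fun e => (eventually_gt_nhds (hpred i e)).mono fun _ => le_of_lt
  filter_upwards [self_mem_nhdsWithin, nhdsWithin_le_nhds habove]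
    with t (htk : t < lam k) ⟨ht, hi⟩
  exact h.update ht (fun i e => hi i (Finset.mem_range.2 e.lt) e)
    fun j e => htk.le.trans (h.le_of_constraintEdge e)

lemma one_le_mul_of_isMin {z : ℕ → ℝ} (hfeas : Feas q m lam)
    (hmin : ∀ mu, Feas q m mu → Fobj m z lam ≤ Fobj m z mu) (hk : k ∈ Finset.Icc 1 m)
    (hsucc : ∀ j, ConstraintEdge q m k j → lam k < lam j) : 1 ≤ z k * lam k := by
  have hpos := (feas_iff.1 hfeas).1 k hk
  refine one_le_mul_of_eventually_nhdsGT hpos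
    ((hfeas.eventually_update_nhdsGT hpos hsucc).mono fun t ht => ?_)
  linarith [hmin _ ht, Fobj_update z lam hk t]

lemma mul_le_one_of_isMin {z : ℕ → ℝ} (hfeas : Feas q m lam)
    (hmin : ∀ mu, Feas q m mu → Fobj m z lam ≤ Fobj m z mu) (hk : k ∈ Finset.Icc 1 m)
    (hpred : ∀ i, ConstraintEdge q m i k → lam i < lam k) : z k * lam k ≤ 1 := by
  have hpos := (feas_iff.1 hfeas).1 k hk
  refine mul_le_one_of_eventually_nhdsLT hpos
    ((hfeas.eventually_update_nhdsLT hpos hpred).mono fun t ht => ?_)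
  linarith [hmin _ ht, Fobj_update z lam hk t]

lemma eq_succ_of_isMin {z : ℕ → ℝ} (hfeas : Feas q m lam)
    (hmin : ∀ mu, Feas q m mu → Fobj m z lam ≤ Fobj m z mu) {a : ℕ} (ha : 1 ≤ a) (haq : a < q)
    (hqm : q ≤ m) (hz : z a ≤ z (a + 1)) : lam a = lam (a + 1) := by
  refine (hfeas.le_of_constraintEdge (.inl ⟨ha, rfl, haq⟩)).eq_of_not_lt fun hlt => ?_
  have hraise : 1 ≤ z a * lam a :=
    hfeas.one_le_mul_of_isMin hmin (Finset.mem_Icc.2 ⟨ha, by omega⟩) fun j e => by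
      obtain rfl : j = a + 1 := by unfold ConstraintEdge at e; omega
      exact hlt
  have hlower : z (a + 1) * lam (a + 1) ≤ 1 :=
    hfeas.mul_le_one_of_isMin hmin (Finset.mem_Icc.2 ⟨by omega, by omega⟩) fun i e => by
      obtain rfl : i = a := by unfold ConstraintEdge at e; omega
      exact hlt
  have hpos := (feas_iff.1 hfeas).1 a (Finset.mem_Icc.2 ⟨ha, by omega⟩)
  exact (one_lt_mul_of_one_le_mul hraise hz hpos hlt).not_ge hlower

lemma eq_of_isMin_of_forall_le {z : ℕ → ℝ} (hfeas : Feas q m lam)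
    (hmin : ∀ mu, Feas q m mu → Fobj m z lam ≤ Fobj m z mu) {c : ℕ} (hq : 1 ≤ q) (hqc : q < c)
    (hcm : c ≤ m) (hzq : z q ≤ z c) (hzc : ∀ j, q < j → j ≤ m → z j ≤ z c) :
    lam q = lam c := by
  refine (hfeas.le_of_constraintEdge (.inr ⟨rfl, hqc, hcm⟩)).eq_of_not_lt fun hlt => ?_
  have hlower : z c * lam c ≤ 1 :=
    hfeas.mul_le_one_of_isMin hmin (Finset.mem_Icc.2 ⟨by omega, hcm⟩) fun i e => by
      obtain rfl : i = q := by unfold ConstraintEdge at e; omega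
      exact hlt
  obtain ⟨k, hzk, hraise⟩ : ∃ k, z k ≤ z c ∧ 1 ≤ z k * lam q := by
    by_cases htied : ∃ j, q < j ∧ j ≤ m ∧ lam j = lam q
    · obtain ⟨j, hqj, hjm, hj⟩ := htied
      refine ⟨j, hzc j hqj hjm, hj ▸ hfeas.one_le_mul_of_isMin hmin
        (Finset.mem_Icc.2 ⟨by omega, hjm⟩) fun j' e => ?_⟩
      unfold ConstraintEdge at e
      omega
    · push Not at htied
      refine ⟨q, hzq, hfeas.one_le_mul_of_isMin hmin (Finset.mem_Icc.2 ⟨hq, by omega⟩)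
        fun j e => ?_⟩
      obtain ⟨hqj, hjm⟩ : q < j ∧ j ≤ m := by unfold ConstraintEdge at e; omega
      exact (hfeas.le_of_constraintEdge e).lt_of_ne (htied j hqj hjm).symm
  have hpos := (feas_iff.1 hfeas).1 q (Finset.mem_Icc.2 ⟨hq, by omega⟩)
  exact (one_lt_mul_of_one_le_mul hraise hzk hpos hlt).not_ge hlower

end Feas

theorem stmt12_general (m q : ℕ) (hqm : q < m) (z : ℕ → ℝ)
    (r : ℕ) (hr : r < q)
    (C : Finset ℕ) (hCsub : C ⊆ Finset.Icc (q + 1) m)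
    (hord : ∀ i, 1 ≤ i → i ≤ r → z (q - i) ≤ z (q - i + 1))
    (hCineq : ∀ c ∈ C, z q ≤ z c)
    (houtside : ∀ j', q < j' → j' ≤ m → j' ∉ C → z j' < z q)
    (lam : ℕ → ℝ) (hfeas : Feas q m lam)
    (hmin : ∀ mu : ℕ → ℝ, Feas q m mu → Fobj m z lam ≤ Fobj m z mu) :
    (∀ i, q - r ≤ i → i ≤ q → lam i = lam q) ∧
    (∀ c ∈ C, (∀ c' ∈ C, z c' ≤ z c) → lam q = lam c) := by
  refine ⟨fun i hri hiq => eq_of_forall_eq_succ (fun a hra haq => ?_) hri hiq,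
    fun c hc hcmax => ?_⟩
  · refine hfeas.eq_succ_of_isMin hmin (by omega) haq hqm.le ?_
    have := hord (q - a) (by omega) (by omega)
    rwa [Nat.sub_sub_self haq.le] at this
  · obtain ⟨hqc, hcm⟩ := Finset.mem_Icc.1 (hCsub hc)
    refine hfeas.eq_of_isMin_of_forall_le hmin (by omega) (by omega) hcm (hCineq c hc)
      fun j hqj hjm => ?_
    by_cases hj : j ∈ C
    · exact hcmax j hj
    · exact (houtside j hqj hjm hj).le.trans (hCineq c hc)

theorem stmt12 (m q : ℕ) (hq : 1 ≤ q) (hqm : q < m) (z : ℕ → ℝ)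
    (hz : ∀ i ∈ Finset.Icc 1 m, 0 < z i)
    (r : ℕ) (hr : r < q)
    (C : Finset ℕ) (hC : C.Nonempty) (hCsub : C ⊆ Finset.Icc (q + 1) m)
    (hleft : 1 < q - r → z (q - r) < z (q - r - 1))
    (hord : ∀ i, 1 ≤ i → i ≤ r → z (q - i) ≤ z (q - i + 1))
    (hCineq : ∀ c ∈ C, z q ≤ z c)
    (hstrict : (∃ i, 1 ≤ i ∧ i ≤ r ∧ z (q - i) < z (q - i + 1)) ∨ ∃ c ∈ C, z q < z c)
    (houtside : ∀ j', q < j' → j' ≤ m → j' ∉ C → z j' < z q)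
    (lam : ℕ → ℝ) (hfeas : Feas q m lam)
    (hmin : ∀ mu : ℕ → ℝ, Feas q m mu → Fobj m z lam ≤ Fobj m z mu) :
    (∀ i, q - r ≤ i → i ≤ q → lam i = lam q) ∧
    (∀ c ∈ C, (∀ c' ∈ C, z c' ≤ z c) → lam q = lam c) :=
  stmt12_general m q hqm z r hr C hCsub hord hCineq houtside lam hfeas hmin
end
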